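/- arXiv:2109.06927 — 6 statements merged into one kernel-verified Lean document; each statement's English description precedes it below -/
import Mathlib

section
/- Let p, q > 0 and define μ: ℝ² → ℝ² by μ(s,t) = (-s + q·max(t + p·max(s,0), 0), -t - p·max(s,0)). Define φ(s,t) = g(s,t) if s < 0 and t > 0, and φ(s,t) = f(s,t) otherwise, where f(x,y) = p x² + pq xy + q y² and g(x,y) = p x² - pq xy + q y². Then φ(μ(s,t)) = φ(s,t) for all (s,t) ∈ ℝ². -/
/-!
Write `u = t + p·max(s, 0)`, so that `μ(s, t) = (-s + q·max(u, 0), -u)`. The two quadratic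
forms `f` and `g` agree on the coordinate axes, so `φ` is `g` on the closed quadrant
`s ≤ 0 ≤ t` and `f` on the closed complement, and both are even. Splitting by the signs of
`s` and `u`, invariance reduces to two shear identities: `f(q u - s, -u) = g(s, u)` and
`g(s, t + p s) = f(s, t)`.
-/

namespace TropicalMutation

variable (p q : ℝ)

def quadPlus (x y : ℝ) : ℝ := p * x ^ 2 + p * q * x * y + q * y ^ 2

def quadMinus (x y : ℝ) : ℝ := p * x ^ 2 - p * q * x * y + q * y ^ 2

noncomputable def pwQuad (v : ℝ × ℝ) : ℝ :=
  if v.1 < 0 ∧ v.2 > 0 then quadMinus p q v.1 v.2 else quadPlus p q v.1 v.2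

def mutation (v : ℝ × ℝ) : ℝ × ℝ :=
  (-v.1 + q * max (v.2 + p * max v.1 0) 0, -v.2 - p * max v.1 0)

variable {p q}

theorem quadPlus_neg (x y : ℝ) : quadPlus p q (-x) (-y) = quadPlus p q x y := by
  unfold quadPlus; ring

theorem quadMinus_neg (x y : ℝ) : quadMinus p q (-x) (-y) = quadMinus p q x y := by
  unfold quadMinus; ring

theorem quadPlus_shear (x y : ℝ) : quadPlus p q (-x + q * y) (-y) = quadMinus p q x y := by
  unfold quadPlus quadMinus; ring

theorem quadMinus_shear (x y : ℝ) : quadMinus p q x (y + p * x) = quadPlus p q x y := by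
  unfold quadPlus quadMinus; ring

theorem quadMinus_eq_quadPlus {x y : ℝ} (h : x * y = 0) : quadMinus p q x y = quadPlus p q x y := by
  unfold quadPlus quadMinus; linear_combination (-2 * p * q) * h

theorem pwQuad_of_nonneg_left {s t : ℝ} (hs : 0 ≤ s) : pwQuad p q (s, t) = quadPlus p q s t :=
  if_neg fun h => hs.not_gt h.1

theorem pwQuad_of_nonpos_right {s t : ℝ} (ht : t ≤ 0) : pwQuad p q (s, t) = quadPlus p q s t :=
  if_neg fun h => ht.not_gt h.2

theorem pwQuad_of_nonpos_of_nonneg {s t : ℝ} (hs : s ≤ 0) (ht : 0 ≤ t) :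
    pwQuad p q (s, t) = quadMinus p q s t := by
  by_cases h : s < 0 ∧ t > 0
  · exact if_pos h
  · have hst : s * t = 0 := by
      rcases not_and_or.mp h with h | h
      · rw [le_antisymm hs (not_lt.mp h), zero_mul]
      · rw [le_antisymm (not_lt.mp h) ht, mul_zero]
    exact (if_neg h).trans (quadMinus_eq_quadPlus hst).symm

theorem mutation_eq (s t : ℝ) :
    mutation p q (s, t) = (-s + q * max (t + p * max s 0) 0, -(t + p * max s 0)) :=
  Prod.ext rfl (neg_add' t _).symm

theorem pwQuad_mutation (v : ℝ × ℝ) : pwQuad p q (mutation p q v) = pwQuad p q v := by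
  obtain ⟨s, t⟩ := v
  rw [mutation_eq]
  rcases le_total s 0 with hs | hs
  · rw [max_eq_right hs, mul_zero, add_zero]
    rcases le_total t 0 with ht | ht
    · rw [max_eq_right ht, mul_zero, add_zero, pwQuad_of_nonneg_left (neg_nonneg.mpr hs),
        pwQuad_of_nonpos_right ht, quadPlus_neg]
    · rw [max_eq_left ht, pwQuad_of_nonpos_right (neg_nonpos.mpr ht), quadPlus_shear,
        pwQuad_of_nonpos_of_nonneg hs ht]
  · rw [max_eq_left hs, pwQuad_of_nonneg_left hs, ← quadMinus_shear]
    rcases le_total (t + p * s) 0 with hu | hu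
    · rw [max_eq_right hu, mul_zero, add_zero,
        pwQuad_of_nonpos_of_nonneg (neg_nonpos.mpr hs) (neg_nonneg.mpr hu), quadMinus_neg]
    · rw [max_eq_left hu, pwQuad_of_nonpos_right (neg_nonpos.mpr hu), quadPlus_shear]

end TropicalMutation

theorem stmt_5_general (p q : ℝ)
    (μ : ℝ × ℝ → ℝ × ℝ)
    (hμ : ∀ s t : ℝ, μ (s, t) = (-s + q * max (t + p * max s 0) 0, -t - p * max s 0))
    (f g : ℝ → ℝ → ℝ)
    (hf : ∀ x y, f x y = p * x ^ 2 + p * q * x * y + q * y ^ 2)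
    (hg : ∀ x y, g x y = p * x ^ 2 - p * q * x * y + q * y ^ 2)
    (φ : ℝ × ℝ → ℝ)
    (hφ : ∀ s t : ℝ, φ (s, t) = if s < 0 ∧ t > 0 then g s t else f s t) :
    ∀ s t : ℝ, φ (μ (s, t)) = φ (s, t) := by
  obtain rfl : f = TropicalMutation.quadPlus p q := funext₂ hf
  obtain rfl : g = TropicalMutation.quadMinus p q := funext₂ hg
  obtain rfl : φ = TropicalMutation.pwQuad p q := funext fun ⟨s, t⟩ => hφ s t
  obtain rfl : μ = TropicalMutation.mutation p q := funext fun ⟨s, t⟩ => hμ s t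
  exact fun s t => TropicalMutation.pwQuad_mutation (s, t)

theorem stmt_5 (p q : ℝ) (hp : 0 < p) (hq : 0 < q)
    (μ : ℝ × ℝ → ℝ × ℝ)
    (hμ : ∀ s t : ℝ, μ (s, t) = (-s + q * max (t + p * max s 0) 0, -t - p * max s 0))
    (f g : ℝ → ℝ → ℝ)
    (hf : ∀ x y, f x y = p * x ^ 2 + p * q * x * y + q * y ^ 2)
    (hg : ∀ x y, g x y = p * x ^ 2 - p * q * x * y + q * y ^ 2)
    (φ : ℝ × ℝ → ℝ)
    (hφ : ∀ s t : ℝ, φ (s, t) = if s < 0 ∧ t > 0 then g s t else f s t) :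
    ∀ s t : ℝ, φ (μ (s, t)) = φ (s, t) :=
  stmt_5_general p q μ hμ f g hf hg φ hφ
end

section
/- Let τ(s,t) = ((pq-1)s + q t, -p s - t), where p, q > 0. For any (s,t) ∈ ℝ², writing (sₙ, tₙ) = τⁿ(s,t), we have sₙ = s·U_{2n}(κ/2) + t·ν⁻¹·U_{2n-1}(κ/2) and tₙ = -s·ν·U_{2n-1}(κ/2) - t·U_{2n-2}(κ/2), where κ = sqrt(pq), ν = sqrt(p/q), and U_n denotes the n-th Chebyshev polynomial of the second kind (with U_{-1} = 0, U_{-2} = -1). -/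
open Polynomial Polynomial.Chebyshev

/-!
Writing `κ = 2x`, the hypotheses give `p = νκ` and `q = κ/ν`, so `τ` is the shear composite
`(s, t) ↦ ((κ² - 1) s + (κ/ν) t, -νκ s - t)`. Applying it to the claimed value of `τⁿ(s, t)` and
using the Chebyshev recurrence `U_{k+2}(x) = 2x U_{k+1}(x) - U_k(x)` twice shifts every index
by two, which is the induction step; at `n = 0` the formula reads `(s U₀, -t U₋₂) = (s, t)`.
-/

section

variable {K : Type*} [Field K]

def shearMap (p q : K) (x : K × K) : K × K :=
  ((p * q - 1) * x.1 + q * x.2, -p * x.1 - x.2)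

noncomputable def chebyshevOrbit (x ν s t : K) (m : ℤ) : K × K :=
  (s * (U K (2 * m)).eval x + t * ν⁻¹ * (U K (2 * m - 1)).eval x,
   -s * ν * (U K (2 * m - 1)).eval x - t * (U K (2 * m - 2)).eval x)

lemma chebyshevOrbit_zero (x ν s t : K) : chebyshevOrbit x ν s t 0 = (s, t) := by
  simp [chebyshevOrbit, U_neg_one, U_neg_two]

lemma shearMap_chebyshevOrbit {x ν : K} (hν : ν ≠ 0) (s t : K) (m : ℤ) :
    shearMap (ν * (2 * x)) (2 * x / ν) (chebyshevOrbit x ν s t m) =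
      chebyshevOrbit x ν s t (m + 1) := by
  have hU (n : ℤ) : (U K n).eval x = 2 * x * (U K (n - 1)).eval x - (U K (n - 2)).eval x := by
    rw [U_eq]; simp only [eval_sub, eval_mul, eval_ofNat, eval_X]
  have h₂ := hU (2 * (m + 1))
  have h₁ := hU (2 * m + 1)
  rw [show 2 * (m + 1) - 1 = 2 * m + 1 by ring, show 2 * (m + 1) - 2 = 2 * m by ring] at h₂
  rw [add_sub_cancel_right, show 2 * m + 1 - 2 = 2 * m - 1 by ring] at h₁
  simp only [shearMap, chebyshevOrbit, h₂, h₁, hU (2 * m),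
    show 2 * (m + 1) - 1 = 2 * m + 1 by ring, show 2 * (m + 1) - 2 = 2 * m by ring, Prod.mk.injEq]
  constructor <;> (field_simp; ring)

lemma shearMap_iterate {x ν : K} (hν : ν ≠ 0) (s t : K) (n : ℕ) :
    (shearMap (ν * (2 * x)) (2 * x / ν))^[n] (s, t) = chebyshevOrbit x ν s t n := by
  induction n with
  | zero => exact (chebyshevOrbit_zero x ν s t).symm
  | succ n ih =>
    rw [Function.iterate_succ_apply', ih, shearMap_chebyshevOrbit hν, Nat.cast_succ]

end

lemma Real.sqrt_div_mul_sqrt_mul {p q : ℝ} (hp : 0 < p) (hq : 0 < q) :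
    √(p / q) * √(p * q) = p := by
  rw [← Real.sqrt_mul (by positivity), show p / q * (p * q) = p ^ 2 by field_simp,
    Real.sqrt_sq hp.le]

lemma Real.sqrt_mul_div_sqrt_div {p q : ℝ} (hp : 0 < p) (hq : 0 < q) :
    √(p * q) / √(p / q) = q := by
  rw [← Real.sqrt_div' _ (by positivity), show p * q / (p / q) = q ^ 2 by field_simp,
    Real.sqrt_sq hq.le]

theorem stmt_7 (p q : ℝ) (hp : 0 < p) (hq : 0 < q)
    (τ : ℝ × ℝ → ℝ × ℝ)
    (hτ : ∀ s t : ℝ, τ (s, t) = ((p * q - 1) * s + q * t, -p * s - t))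
    (κ ν : ℝ) (hκ : κ = Real.sqrt (p * q)) (hν : ν = Real.sqrt (p / q))
    (s t : ℝ) (n : ℕ) :
    τ^[n] (s, t) =
      (s * (U ℝ (2 * n)).eval (κ / 2) + t * ν⁻¹ * (U ℝ (2 * n - 1)).eval (κ / 2),
       -s * ν * (U ℝ (2 * n - 1)).eval (κ / 2) - t * (U ℝ (2 * n - 2)).eval (κ / 2)) := by
  have hν₀ : ν ≠ 0 := by rw [hν]; positivity
  have hτ_eq : τ = shearMap (ν * (2 * (κ / 2))) (2 * (κ / 2) / ν) := by
    funext x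
    rw [mul_div_cancel₀ κ two_ne_zero, hκ, hν, Real.sqrt_div_mul_sqrt_mul hp hq,
      Real.sqrt_mul_div_sqrt_div hp hq]
    exact hτ x.1 x.2
  rw [hτ_eq, shearMap_iterate hν₀]
  rfl
end

section
/- Suppose pq = 4cos²θ with 0 < θ < π/2, p, q > 0. Let τ(s,t) = ((pq-1)s + qt, -ps - t) and (sₙ, tₙ) = τⁿ(s,t). Then sₙ = (s·sin((2n+1)θ) + (t/ν)·sin(2nθ))/sin(θ) and tₙ = (-s·ν·sin(2nθ) - t·sin((2n-1)θ))/sin(θ), where ν = sqrt(p/q). -/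
/-! In the coordinates `(s, t / ν)` the map `τ` has trace `4 cos² θ - 2 = 2 cos 2θ` and determinant
`1`, so it is conjugate to the rotation by `2θ`. Concretely, `w x = s sin (x + θ) + (t / ν) sin x`
satisfies the sine recurrence `w (x + θ) = 2 cos θ · w x - w (x - θ)`, the iterate `τⁿ (s, t)` is
read off from `w (2nθ)` and `w (2nθ - θ)`, and, since `qν = 2 cos θ` and `p = 2ν cos θ`, one step
of `τ` is two steps of the recurrence. -/

open Real

lemma Real.sin_add_eq_two_mul_cos_mul_sin_sub_sin_sub (x θ : ℝ) :
    sin (x + θ) = 2 * cos θ * sin x - sin (x - θ) := by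
  rw [sin_add, sin_sub]
  ring

noncomputable def sinWave (a b θ x : ℝ) : ℝ := a * sin (x + θ) + b * sin x

lemma sinWave_add (a b θ x : ℝ) :
    sinWave a b θ (x + θ) = 2 * cos θ * sinWave a b θ x - sinWave a b θ (x - θ) := by
  simp only [sinWave, Real.sin_add_eq_two_mul_cos_mul_sin_sub_sin_sub (x + θ),
    Real.sin_add_eq_two_mul_cos_mul_sin_sub_sin_sub x, add_sub_cancel_right, sub_add_cancel]
  ring

lemma iterate_eq_sinWave (p q θ ν : ℝ) (hθ : sin θ ≠ 0) (hν : ν ≠ 0)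
    (hqν : q * ν = 2 * cos θ) (hpν : p = 2 * ν * cos θ)
    (τ : ℝ × ℝ → ℝ × ℝ) (hτ : ∀ s t : ℝ, τ (s, t) = ((p * q - 1) * s + q * t, -p * s - t))
    (s t : ℝ) (n : ℕ) :
    τ^[n] (s, t) = (sinWave s (t / ν) θ (2 * n * θ) / sin θ,
      -ν * sinWave s (t / ν) θ (2 * n * θ - θ) / sin θ) := by
  induction n with
  | zero =>
    simp only [Function.iterate_zero, id_eq, Nat.cast_zero, mul_zero, zero_mul, zero_sub,
      sinWave, zero_add, add_zero, sin_zero, sin_neg, neg_add_cancel]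
    ext <;> field_simp
  | succ n ih =>
    set x := 2 * (n : ℝ) * θ
    have hx : 2 * ((n + 1 : ℕ) : ℝ) * θ = x + θ + θ := by push_cast; ring
    have hq : q = 2 * cos θ / ν := by rw [← hqν]; field_simp
    rw [Function.iterate_succ_apply', ih, hτ, hx, add_sub_cancel_right, sinWave_add _ _ _ (x + θ),
      sinWave_add, add_sub_cancel_right, hpν, hq]
    ext <;> field_simp <;> ring

theorem stmt_8 (p q θ : ℝ) (hp : 0 < p) (hq : 0 < q)
    (hθ₁ : 0 < θ) (hθ₂ : θ < π / 2) (hpq : p * q = 4 * Real.cos θ ^ 2)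
    (ν : ℝ) (hν : ν = Real.sqrt (p / q))
    (τ : ℝ × ℝ → ℝ × ℝ)
    (hτ : ∀ s t : ℝ, τ (s, t) = ((p * q - 1) * s + q * t, -p * s - t))
    (s t : ℝ) (n : ℕ) :
    τ^[n] (s, t) =
      ((s * Real.sin ((2 * n + 1) * θ) + (t / ν) * Real.sin (2 * n * θ)) / Real.sin θ,
       (-s * ν * Real.sin (2 * n * θ) - t * Real.sin ((2 * n - 1) * θ)) / Real.sin θ) := by
  have hsin : 0 < sin θ := sin_pos_of_pos_of_lt_pi hθ₁ (by linarith [pi_pos])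
  have hcos : 0 < cos θ := cos_pos_of_mem_Ioo ⟨by linarith [pi_pos], hθ₂⟩
  have hν0 : 0 < ν := hν ▸ sqrt_pos.mpr (div_pos hp hq)
  have hν2 : ν ^ 2 = p / q := hν ▸ sq_sqrt (div_pos hp hq).le
  have hqν : q * ν = 2 * cos θ := by
    refine (pow_left_inj₀ (by positivity) (by positivity) two_ne_zero).mp ?_
    rw [mul_pow, hν2, show q ^ 2 * (p / q) = p * q by field_simp, hpq]
    ring
  have hpν : p = 2 * ν * cos θ := by
    calc p = q * ν ^ 2 := by rw [hν2]; field_simp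
      _ = 2 * ν * cos θ := by linear_combination ν * hqν
  rw [iterate_eq_sinWave p q θ ν hsin.ne' hν0.ne' hqν hpν τ hτ s t n,
    show (2 * n + 1) * θ = 2 * n * θ + θ by ring, show (2 * n - 1) * θ = 2 * n * θ - θ by ring]
  ext
  · simp only [sinWave]
  · simp only [sinWave, sub_add_cancel]
    field_simp
    ring
end

section
/- Let p, q > 0 with pq = 4cos²(π/m), m an integer ≥ 3, and let μ be the tropical mutation map μ(s,t) = (-s + q·max(t + p·max(s,0), 0), -t - p·max(s,0)). Then μ is periodic: μ^(m+2) = id when m is odd, and μ^((m+2)/2) = id when m is even. -/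
open Real

/-!
The map is positively homogeneous and linear on each of the four closed cones cut out by
`s = 0` and `t + p * max s 0 = 0`. With `θ = π / m` and `c = cos θ`, the `m + 2` rays
`f k = (2c sin ((k - 1)θ), -p sin (kθ))`, `0 ≤ k ≤ m + 1`, taken cyclically, cut the plane into
cones each lying in one of these domains of linearity, and `pq = 4c²` together with
`sin ((k + 1)θ) + sin ((k - 1)θ) = 2c sin (kθ)` gives `μ (f k) = f (k - 2)`, indices mod `m + 2`.
So `μ` maps the cone spanned by `f k, f (k + 1)` linearly onto the one spanned by
`f (k - 2), f (k - 1)`, and `μ^[N] = id` as soon as `m + 2 ∣ 2N`. The cones cover the plane since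
consecutive rays have the same positive determinant `2pc sin² θ` and `f m = -f 0`.
-/

lemma max_add_mul_zero_of_mul_nonneg {x y a b : ℝ} (hxy : 0 ≤ x * y) (ha : 0 ≤ a)
    (hb : 0 ≤ b) : max (a * x + b * y) 0 = a * max x 0 + b * max y 0 := by
  rcases mul_nonneg_iff.mp hxy with ⟨hx, hy⟩ | ⟨hx, hy⟩
  · rw [max_eq_left hx, max_eq_left hy, max_eq_left (by positivity)]
  · rw [max_eq_right hx, max_eq_right hy, max_eq_right (by nlinarith)]
    ring

lemma exists_nonneg_and_succ_nonpos {α : Type*} [LinearOrder α] [Zero α] {g : ℕ → α}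
    {a b : ℕ} (hab : a < b) (ha : 0 ≤ g a) (hb : g b ≤ 0) :
    ∃ j, 0 ≤ g j ∧ g (j + 1) ≤ 0 := by
  induction b, hab using Nat.le_induction with
  | base => exact ⟨a, ha, hb⟩
  | succ b _ ih =>
    by_cases h : 0 ≤ g b
    · exact ⟨b, h, hb⟩
    · exact ih (le_of_not_ge h)

def cross (x y : ℝ × ℝ) : ℝ := x.1 * y.2 - x.2 * y.1

lemma cross_swap (x y : ℝ × ℝ) : cross x y = -cross y x := by
  unfold cross; ring

lemma exists_nonneg_smul_add_of_cross_nonneg {u v x : ℝ × ℝ} (huv : 0 < cross u v)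
    (hu : 0 ≤ cross u x) (hv : 0 ≤ cross x v) :
    ∃ a b : ℝ, 0 ≤ a ∧ 0 ≤ b ∧ x = a • u + b • v := by
  refine ⟨cross x v / cross u v, cross u x / cross u v, div_nonneg hv huv.le,
    div_nonneg hu huv.le, ?_⟩
  ext <;> simp only [Prod.fst_add, Prod.snd_add, Prod.smul_fst, Prod.smul_snd, smul_eq_mul] <;>
    field_simp <;> simp only [cross] <;> ring

def tropMut₁ (p : ℝ) (x : ℝ × ℝ) : ℝ × ℝ := (-x.1, x.2 + p * max x.1 0)

def tropMut₂ (q : ℝ) (x : ℝ × ℝ) : ℝ × ℝ := (x.1 + q * max x.2 0, -x.2)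

def tropMut (p q : ℝ) : ℝ × ℝ → ℝ × ℝ := tropMut₂ q ∘ tropMut₁ p

section linearity
variable {x y : ℝ × ℝ} {a b : ℝ}

lemma tropMut₁_smul_add_smul (p : ℝ) (h : 0 ≤ x.1 * y.1) (ha : 0 ≤ a) (hb : 0 ≤ b) :
    tropMut₁ p (a • x + b • y) = a • tropMut₁ p x + b • tropMut₁ p y := by
  ext <;> simp only [tropMut₁, Prod.fst_add, Prod.snd_add, Prod.smul_fst, Prod.smul_snd,
    smul_eq_mul, max_add_mul_zero_of_mul_nonneg h ha hb] <;> ring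

lemma tropMut₂_smul_add_smul (q : ℝ) (h : 0 ≤ x.2 * y.2) (ha : 0 ≤ a) (hb : 0 ≤ b) :
    tropMut₂ q (a • x + b • y) = a • tropMut₂ q x + b • tropMut₂ q y := by
  ext <;> simp only [tropMut₂, Prod.fst_add, Prod.snd_add, Prod.smul_fst, Prod.smul_snd,
    smul_eq_mul, max_add_mul_zero_of_mul_nonneg h ha hb] <;> ring

lemma tropMut_smul_add_smul (p q : ℝ) (h₁ : 0 ≤ x.1 * y.1)
    (h₂ : 0 ≤ (tropMut₁ p x).2 * (tropMut₁ p y).2) (ha : 0 ≤ a) (hb : 0 ≤ b) :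
    tropMut p q (a • x + b • y) = a • tropMut p q x + b • tropMut p q y := by
  simp only [tropMut, Function.comp_apply, tropMut₁_smul_add_smul p h₁ ha hb,
    tropMut₂_smul_add_smul q h₂ ha hb]

end linearity

section trig
variable {m : ℕ}

lemma sin_mul_pi_div_nonneg {x : ℝ} (hx₀ : 0 ≤ x) (hxm : x ≤ m) : 0 ≤ sin (x * (π / m)) := by
  apply sin_nonneg_of_nonneg_of_le_pi (by positivity)
  calc x * (π / m) = x / m * π := by ring
    _ ≤ π := mul_le_of_le_one_left pi_pos.le (div_le_one_of_le₀ hxm (Nat.cast_nonneg m))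

lemma sin_pi_div_pos (hm : 2 ≤ m) : 0 < sin (π / m) := by
  have : (2 : ℝ) ≤ m := by exact_mod_cast hm
  apply sin_pos_of_pos_of_lt_pi (by positivity)
  rw [div_lt_iff₀ (by positivity)]
  nlinarith [pi_pos]

lemma cos_pi_div_pos (hm : 3 ≤ m) : 0 < cos (π / m) := by
  have : (3 : ℝ) ≤ m := by exact_mod_cast hm
  apply cos_pos_of_mem_Ioo
  constructor
  · linarith [show 0 < π / m by positivity, pi_pos]
  · rw [div_lt_iff₀ (by positivity)]
    nlinarith [pi_pos]

lemma sin_succ_mul_add_sin_pred_mul (x θ : ℝ) :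
    sin ((x + 1) * θ) + sin ((x - 1) * θ) = 2 * cos θ * sin (x * θ) := by
  rw [add_mul, sub_mul, one_mul, sin_add, sin_sub]
  ring

lemma sin_sq_sub_sin_pred_mul_sin_succ (x θ : ℝ) :
    sin (x * θ) ^ 2 - sin ((x - 1) * θ) * sin ((x + 1) * θ) = sin θ ^ 2 := by
  rw [show (x - 1) * θ = x * θ - θ by ring, show (x + 1) * θ = x * θ + θ by ring,
    sin_sub, sin_add]
  linear_combination sin θ ^ 2 * sin_sq_add_cos_sq (x * θ) - sin (x * θ) ^ 2 * sin_sq_add_cos_sq θ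

lemma sin_nat_mul_pi_div_self (hm : m ≠ 0) : sin (m * (π / m)) = 0 := by
  rw [mul_div_cancel₀ _ (Nat.cast_ne_zero.mpr hm), sin_pi]

lemma sin_pred_mul_pi_div_self (hm : m ≠ 0) : sin ((m - 1) * (π / m)) = sin (π / m) := by
  rw [sub_mul, mul_div_cancel₀ _ (Nat.cast_ne_zero.mpr hm), one_mul, sin_pi_sub]

lemma sin_succ_mul_pi_div_self (hm : m ≠ 0) : sin ((m + 1) * (π / m)) = -sin (π / m) := by
  rw [add_mul, mul_div_cancel₀ _ (Nat.cast_ne_zero.mpr hm), one_mul, add_comm, sin_add_pi]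

end trig

noncomputable def fanRay (p : ℝ) (m k : ℕ) : ℝ × ℝ :=
  (2 * cos (π / m) * sin ((k - 1) * (π / m)), -p * sin (k * (π / m)))

section fan
variable {p q : ℝ} {m : ℕ}

lemma fanRay_zero : fanRay p m 0 = (-(2 * cos (π / m) * sin (π / m)), 0) := by
  simp [fanRay]

lemma fanRay_one : fanRay p m 1 = (0, -p * sin (π / m)) := by
  simp [fanRay]

lemma fanRay_self (hm : m ≠ 0) : fanRay p m m = -fanRay p m 0 := by
  simp [fanRay, sin_pred_mul_pi_div_self hm, sin_nat_mul_pi_div_self hm]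

lemma fanRay_succ_self (hm : m ≠ 0) : fanRay p m (m + 1) = (0, p * sin (π / m)) := by
  simp [fanRay, sin_nat_mul_pi_div_self hm, sin_succ_mul_pi_div_self hm]

lemma cross_fanRay_succ (k : ℕ) :
    cross (fanRay p m k) (fanRay p m (k + 1)) = 2 * p * cos (π / m) * sin (π / m) ^ 2 := by
  simp only [cross, fanRay, Nat.cast_succ, add_sub_cancel_right]
  linear_combination 2 * p * cos (π / m) * sin_sq_sub_sin_pred_mul_sin_succ (k : ℝ) (π / m)

lemma cross_fanRay_succ_self_zero (hm : m ≠ 0) :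
    cross (fanRay p m (m + 1)) (fanRay p m 0) = 2 * p * cos (π / m) * sin (π / m) ^ 2 := by
  rw [fanRay_succ_self hm, fanRay_zero, cross]
  ring

lemma fanRay_fst_nonneg (hm : 3 ≤ m) {k : ℕ} (hk₁ : 1 ≤ k) (hk : k ≤ m + 1) :
    0 ≤ (fanRay p m k).1 := by
  have hc := cos_pi_div_pos hm
  have hs : 0 ≤ sin ((k - 1) * (π / m)) :=
    sin_mul_pi_div_nonneg (sub_nonneg.mpr (by exact_mod_cast hk₁))
      (sub_le_iff_le_add.mpr (by exact_mod_cast hk))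
  simp only [fanRay]
  positivity

lemma tropMut₁_fanRay_zero (hm : 3 ≤ m) :
    tropMut₁ p (fanRay p m 0) = (2 * cos (π / m) * sin (π / m), 0) := by
  have hc := cos_pi_div_pos hm
  have hs := sin_pi_div_pos (m := m) (by omega)
  rw [fanRay_zero, tropMut₁, max_eq_right (by simp only [neg_nonpos]; positivity)]
  simp

lemma tropMut₁_fanRay_succ (hm : 3 ≤ m) {k : ℕ} (hk : k ≤ m) :
    tropMut₁ p (fanRay p m (k + 1)) =
      (-(fanRay p m (k + 1)).1, p * sin ((k - 1) * (π / m))) := by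
  rw [tropMut₁, max_eq_left (fanRay_fst_nonneg hm (by omega) (by omega))]
  simp only [fanRay, Nat.cast_succ, add_sub_cancel_right, Prod.mk.injEq, true_and]
  linear_combination -p * sin_succ_mul_add_sin_pred_mul (k : ℝ) (π / m)

lemma tropMut_fanRay_zero (hm : 3 ≤ m) : tropMut p q (fanRay p m 0) = fanRay p m m := by
  rw [tropMut, Function.comp_apply, tropMut₁_fanRay_zero hm, fanRay_self (by omega), fanRay_zero]
  simp [tropMut₂]

lemma tropMut_fanRay_one (hp : 0 ≤ p) (hm : 2 ≤ m) :
    tropMut p q (fanRay p m 1) = fanRay p m (m + 1) := by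
  have hu : 0 ≤ p * sin (π / m) := mul_nonneg hp (sin_pi_div_pos hm).le
  simp [tropMut, tropMut₁, tropMut₂, fanRay_one, fanRay_succ_self (show m ≠ 0 by omega), hu]

lemma tropMut_fanRay_add_two (hp : 0 ≤ p) (hm : 3 ≤ m) (hpq : p * q = 4 * cos (π / m) ^ 2)
    {k : ℕ} (hk : k < m) : tropMut p q (fanRay p m (k + 2)) = fanRay p m k := by
  have hu : 0 ≤ p * sin (k * (π / m)) :=
    mul_nonneg hp (sin_mul_pi_div_nonneg (Nat.cast_nonneg k) (by exact_mod_cast hk.le))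
  rw [tropMut, Function.comp_apply, tropMut₁_fanRay_succ hm (k := k + 1) (by omega)]
  simp only [tropMut₂, fanRay, Nat.cast_add, Nat.cast_one, add_sub_cancel_right,
    max_eq_left hu, Prod.mk.injEq]
  constructor
  · linear_combination (-2 * cos (π / m)) * sin_succ_mul_add_sin_pred_mul (k : ℝ) (π / m) +
      sin (k * (π / m)) * hpq
  · ring

lemma fanRay_fst_mul_succ_nonneg (hm : 3 ≤ m) {k : ℕ} (hk : k ≤ m) :
    0 ≤ (fanRay p m k).1 * (fanRay p m (k + 1)).1 := by
  rcases k with _ | k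
  · simp [fanRay_one]
  · exact mul_nonneg (fanRay_fst_nonneg hm (by omega) (by omega))
      (fanRay_fst_nonneg hm (by omega) (by omega))

lemma tropMut₁_fanRay_snd_mul_succ_nonneg (hp : 0 ≤ p) (hm : 3 ≤ m) {k : ℕ} (hk : k ≤ m) :
    0 ≤ (tropMut₁ p (fanRay p m k)).2 * (tropMut₁ p (fanRay p m (k + 1))).2 := by
  obtain _ | _ | k := k
  · simp [tropMut₁_fanRay_zero hm]
  · simp [tropMut₁_fanRay_succ hm (k := 1) (by omega)]
  · rw [tropMut₁_fanRay_succ hm (k := k + 1) (by omega),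
      tropMut₁_fanRay_succ hm (k := k + 2) (by omega)]
    have hk' : (k : ℝ) + 2 ≤ m := by exact_mod_cast hk
    have hk₀ : (0 : ℝ) ≤ k := k.cast_nonneg
    push_cast
    exact mul_nonneg (mul_nonneg hp (sin_mul_pi_div_nonneg (by linarith) (by linarith)))
      (mul_nonneg hp (sin_mul_pi_div_nonneg (by linarith) (by linarith)))

end fan

noncomputable def ray (p : ℝ) (m : ℕ) (i : ZMod (m + 2)) : ℝ × ℝ := fanRay p m i.val

section cyclic
variable {p q : ℝ} {m : ℕ}

lemma ray_zero : ray p m 0 = fanRay p m 0 := by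
  rw [ray, ZMod.val_zero]

lemma ray_natCast_of_lt {k : ℕ} (hk : k < m + 2) : ray p m k = fanRay p m k := by
  rw [ray, ZMod.val_cast_of_lt hk]

lemma ray_consecutive {P : ℝ × ℝ → ℝ × ℝ → Prop}
    (h : ∀ k ≤ m, P (fanRay p m k) (fanRay p m (k + 1)))
    (hwrap : P (fanRay p m (m + 1)) (fanRay p m 0)) (i : ZMod (m + 2)) :
    P (ray p m i) (ray p m (i + 1)) := by
  obtain ⟨k, hk, rfl⟩ : ∃ k < m + 2, (k : ZMod (m + 2)) = i :=
    ⟨i.val, i.val_lt, i.natCast_zmod_val⟩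
  rw [← Nat.cast_succ, ray_natCast_of_lt hk]
  rcases Nat.lt_succ_iff_lt_or_eq.mp hk with hk | rfl
  · rw [ray_natCast_of_lt (by omega)]
    exact h k (by omega)
  · rw [ZMod.natCast_self, ray_zero]
    exact hwrap

lemma tropMut_ray (hp : 0 ≤ p) (hm : 3 ≤ m) (hpq : p * q = 4 * cos (π / m) ^ 2)
    (i : ZMod (m + 2)) : tropMut p q (ray p m i) = ray p m (i - 2) := by
  obtain ⟨k, hk, rfl⟩ : ∃ k < m + 2, (k : ZMod (m + 2)) = i :=
    ⟨i.val, i.val_lt, i.natCast_zmod_val⟩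
  have hcycle : (m : ZMod (m + 2)) + 2 = 0 := by exact_mod_cast ZMod.natCast_self (m + 2)
  rw [ray_natCast_of_lt hk]
  obtain _ | _ | k := k
  · rw [tropMut_fanRay_zero hm, ← ray_natCast_of_lt (by omega)]
    congr 1
    push_cast
    linear_combination hcycle
  · rw [tropMut_fanRay_one hp (by omega), ← ray_natCast_of_lt (by omega)]
    congr 1
    push_cast
    linear_combination hcycle
  · rw [tropMut_fanRay_add_two hp hm hpq (by omega), ← ray_natCast_of_lt (by omega)]
    congr 1
    push_cast
    ring

lemma ray_fst_mul_succ_nonneg (hm : 3 ≤ m) (i : ZMod (m + 2)) :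
    0 ≤ (ray p m i).1 * (ray p m (i + 1)).1 :=
  ray_consecutive (P := fun x y ↦ 0 ≤ x.1 * y.1) (fun _ hk ↦ fanRay_fst_mul_succ_nonneg hm hk)
    (by simp [fanRay_succ_self (show m ≠ 0 by omega)]) i

lemma tropMut₁_ray_snd_mul_succ_nonneg (hp : 0 ≤ p) (hm : 3 ≤ m) (i : ZMod (m + 2)) :
    0 ≤ (tropMut₁ p (ray p m i)).2 * (tropMut₁ p (ray p m (i + 1))).2 :=
  ray_consecutive (P := fun x y ↦ 0 ≤ (tropMut₁ p x).2 * (tropMut₁ p y).2)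
    (fun _ hk ↦ tropMut₁_fanRay_snd_mul_succ_nonneg hp hm hk)
    (by simp [tropMut₁_fanRay_zero hm]) i

lemma cross_ray_succ (hm : m ≠ 0) (i : ZMod (m + 2)) :
    cross (ray p m i) (ray p m (i + 1)) = 2 * p * cos (π / m) * sin (π / m) ^ 2 :=
  ray_consecutive (P := fun x y ↦ cross x y = 2 * p * cos (π / m) * sin (π / m) ^ 2)
    (fun k _ ↦ cross_fanRay_succ k) (cross_fanRay_succ_self_zero hm) i

lemma tropMut_ray_cone (hp : 0 ≤ p) (hm : 3 ≤ m) (hpq : p * q = 4 * cos (π / m) ^ 2)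
    (i : ZMod (m + 2)) {a b : ℝ} (ha : 0 ≤ a) (hb : 0 ≤ b) :
    tropMut p q (a • ray p m i + b • ray p m (i + 1)) =
      a • ray p m (i - 2) + b • ray p m (i - 2 + 1) := by
  rw [tropMut_smul_add_smul p q (ray_fst_mul_succ_nonneg hm i)
    (tropMut₁_ray_snd_mul_succ_nonneg hp hm i) ha hb, tropMut_ray hp hm hpq,
    tropMut_ray hp hm hpq, add_sub_right_comm]

lemma tropMut_iterate_ray_cone (hp : 0 ≤ p) (hm : 3 ≤ m) (hpq : p * q = 4 * cos (π / m) ^ 2)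
    (n : ℕ) (i : ZMod (m + 2)) {a b : ℝ} (ha : 0 ≤ a) (hb : 0 ≤ b) :
    (tropMut p q)^[n] (a • ray p m i + b • ray p m (i + 1)) =
      a • ray p m (i - 2 * n) + b • ray p m (i - 2 * n + 1) := by
  induction n generalizing i with
  | zero => simp
  | succ n ih =>
    rw [Function.iterate_succ_apply, tropMut_ray_cone hp hm hpq i ha hb, ih,
      show i - 2 - 2 * (n : ZMod (m + 2)) = i - 2 * ((n + 1 : ℕ) : ZMod (m + 2)) by push_cast; ring]

lemma exists_ray_cone (hp : 0 < p) (hm : 3 ≤ m) (x : ℝ × ℝ) :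
    ∃ (i : ZMod (m + 2)) (a b : ℝ), 0 ≤ a ∧ 0 ≤ b ∧ x = a • ray p m i + b • ray p m (i + 1) := by
  set g : ℕ → ℝ := fun j ↦ cross (ray p m j) x with hg
  have hg_self : g m = -g 0 := by
    simp only [hg, ray_natCast_of_lt (show m < m + 2 by omega), Nat.cast_zero, ray_zero,
      fanRay_self (show m ≠ 0 by omega), cross, Prod.fst_neg, Prod.snd_neg]
    ring
  have hg_period : g (m + 2) = g 0 := by
    simp [hg]
  obtain ⟨j, hj, hj_succ⟩ : ∃ j, 0 ≤ g j ∧ g (j + 1) ≤ 0 := by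
    rcases le_total 0 (g 0) with h | h
    · exact exists_nonneg_and_succ_nonpos (show 0 < m by omega) h (by linarith)
    · exact exists_nonneg_and_succ_nonpos (show m < m + 2 by omega) (by linarith) (by linarith)
  have hpos : 0 < cross (ray p m j) (ray p m (j + 1)) := by
    have := cos_pi_div_pos hm
    have := sin_pi_div_pos (m := m) (by omega)
    rw [cross_ray_succ (by omega)]
    positivity
  obtain ⟨a, b, ha, hb, hx⟩ := exists_nonneg_smul_add_of_cross_nonneg hpos hj
    (by rw [cross_swap]; simpa [hg] using hj_succ)
  exact ⟨j, a, b, ha, hb, hx⟩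

lemma tropMut_iterate_eq_id (hp : 0 < p) (hm : 3 ≤ m) (hpq : p * q = 4 * cos (π / m) ^ 2)
    {N : ℕ} (hN : m + 2 ∣ 2 * N) : (tropMut p q)^[N] = id := by
  have hN' : (2 * N : ZMod (m + 2)) = 0 := by exact_mod_cast (ZMod.natCast_eq_zero_iff _ _).mpr hN
  funext x
  obtain ⟨i, a, b, ha, hb, rfl⟩ := exists_ray_cone hp hm x
  rw [tropMut_iterate_ray_cone hp.le hm hpq N i ha hb, hN', sub_zero, id]

end cyclic

theorem stmt_10_general (p q : ℝ) (hp : 0 < p) (m : ℕ) (hm : 3 ≤ m)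
    (hpq : p * q = 4 * Real.cos (π / m) ^ 2)
    (μ : ℝ × ℝ → ℝ × ℝ)
    (hμ : ∀ s t : ℝ, μ (s, t) = (-s + q * max (t + p * max s 0) 0, -t - p * max s 0)) :
    (Odd m → μ^[m + 2] = id) ∧ (Even m → μ^[(m + 2) / 2] = id) := by
  obtain rfl : μ = tropMut p q := by
    funext ⟨s, t⟩
    rw [hμ]
    simp only [tropMut, Function.comp_apply, tropMut₁, tropMut₂, sub_eq_add_neg, neg_add]
  refine ⟨fun _ ↦ tropMut_iterate_eq_id hp hm hpq (dvd_mul_left _ _),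
    fun ⟨k, hk⟩ ↦ tropMut_iterate_eq_id hp hm hpq ⟨1, by omega⟩⟩

theorem stmt_10 (p q : ℝ) (hp : 0 < p) (hq : 0 < q) (m : ℕ) (hm : 3 ≤ m)
    (hpq : p * q = 4 * Real.cos (π / m) ^ 2)
    (μ : ℝ × ℝ → ℝ × ℝ)
    (hμ : ∀ s t : ℝ, μ (s, t) = (-s + q * max (t + p * max s 0) 0, -t - p * max s 0)) :
    (Odd m → μ^[m + 2] = id) ∧ (Even m → μ^[(m + 2) / 2] = id) :=
  stmt_10_general p q hp m hm hpq μ hμ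
end

section
/- Let p, q > 0 with pq > 4, and suppose (s,t) lies in region R: s > 0, t < 0, and sqrt(p)·s + sqrt(q)·t ≥ 0. Let t' = -ps - t. Then t' ≤ (sqrt(pq) - 1)·t < t < 0; in particular |t'| ≥ (sqrt(pq)-1)·|t| > |t|, so the second coordinate grows in absolute value by a factor of at least sqrt(pq) - 1 > 1. -/
/-!
Write `r = √(pq) = √p √q`. Multiplying `√p s + √q t ≥ 0` by `√p` gives `p s ≥ -r t`, hence
`t' = -p s - t ≤ (r - 1) t`; and `pq > 4` gives `r - 1 > 1`, so multiplying the negative `t`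
by `r - 1` pushes it further from zero.
-/

lemma neg_sqrt_mul_mul_le_of_sqrt_mul_add_nonneg {p q s t : ℝ} (hp : 0 ≤ p)
    (h : 0 ≤ √p * s + √q * t) : -(√(p * q) * t) ≤ p * s := by
  have key : 0 ≤ √p * (√p * s + √q * t) := mul_nonneg (Real.sqrt_nonneg p) h
  have hpp : √p * √p = p := Real.mul_self_sqrt hp
  rw [Real.sqrt_mul hp]
  linear_combination key + s * hpp

lemma one_lt_sqrt_sub_one {x : ℝ} (hx : 4 < x) : 1 < √x - 1 := by
  have : 2 < √x := Real.lt_sqrt_of_sq_lt (by linarith)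
  linarith

lemma mul_lt_self_and_abs_le_of_le_mul {c t t' : ℝ} (hc : 1 < c) (ht : t < 0)
    (h : t' ≤ c * t) : c * t < t ∧ c * |t| ≤ |t'| ∧ |t| < c * |t| := by
  have hct : c * t < t := by nlinarith
  rw [abs_of_neg ht, abs_of_neg (h.trans_lt (hct.trans ht))]
  exact ⟨hct, by linarith, by linarith⟩

theorem stmt_17_general (p q s t : ℝ) (hp : 0 < p) (hpq : 4 < p * q)
    (ht : t < 0) (h : 0 ≤ Real.sqrt p * s + Real.sqrt q * t) :
    -p * s - t ≤ (Real.sqrt (p * q) - 1) * t ∧ (Real.sqrt (p * q) - 1) * t < t ∧ t < 0 ∧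
    (Real.sqrt (p * q) - 1) * |t| ≤ |(-p * s - t)| ∧ |t| < (Real.sqrt (p * q) - 1) * |t| ∧
    1 < Real.sqrt (p * q) - 1 := by
  have hle : -p * s - t ≤ (√(p * q) - 1) * t := by
    linarith [neg_sqrt_mul_mul_le_of_sqrt_mul_add_nonneg hp.le h]
  have hr := one_lt_sqrt_sub_one hpq
  obtain ⟨hlt, habs, habs'⟩ := mul_lt_self_and_abs_le_of_le_mul hr ht hle
  exact ⟨hle, hlt, ht, habs, habs', hr⟩

theorem stmt_17 (p q s t : ℝ) (hp : 0 < p) (hq : 0 < q) (hpq : 4 < p * q)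
    (hs : 0 < s) (ht : t < 0) (h : 0 ≤ Real.sqrt p * s + Real.sqrt q * t) :
    -p * s - t ≤ (Real.sqrt (p * q) - 1) * t ∧ (Real.sqrt (p * q) - 1) * t < t ∧ t < 0 ∧
    (Real.sqrt (p * q) - 1) * |t| ≤ |(-p * s - t)| ∧ |t| < (Real.sqrt (p * q) - 1) * |t| ∧
    1 < Real.sqrt (p * q) - 1 :=
  stmt_17_general p q s t hp hpq ht h
end

section
/- Let p, q > 0 with pq < 4, write pq = 4cos²θ, 0 < θ < π/2. If (2n+2)θ ≤ π and s, t ≥ 0, then μ^(n+1)(s,t) = τ^(n+1)(s,t), where μ is the piecewise-linear tropical mutation map and τ is the linear map τ(s,t) = ((pq-1)s + qt, -ps - t). -/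
/-!
On the cone `0 ≤ s, 0 ≤ t + p s` both `max` terms of `μ` are inactive, so `μ = τ` there and it
suffices that `τᵏ(s, t)` stays in the cone for `k ≤ n`. As `τ` has determinant `1` and trace
`p q - 2 = 2 cos φ`, `φ = 2θ`, it is a rotation by `φ` in suitable coordinates: `sin φ` times
either cone coordinate of `τᵏ(s, t)` is a nonnegative combination of `sin (k φ)` and
`sin ((k + 1) φ)`, which are nonnegative while `(k + 1) φ ≤ π`.
-/

open Real Set

noncomputable section

def tropicalMutation (p q : ℝ) (v : ℝ × ℝ) : ℝ × ℝ :=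
  (-v.1 + q * max (v.2 + p * max v.1 0) 0, -v.2 - p * max v.1 0)

def linearMutation (p q : ℝ) (v : ℝ × ℝ) : ℝ × ℝ :=
  ((p * q - 1) * v.1 + q * v.2, -p * v.1 - v.2)

def linearityCone (p : ℝ) : Set (ℝ × ℝ) :=
  {v | 0 ≤ v.1 ∧ 0 ≤ v.2 + p * v.1}

end

theorem Set.EqOn.iterate_apply_eq {α : Type*} {f g : α → α} {C : Set α} (h : EqOn f g C)
    {x : α} {m : ℕ} (hx : ∀ k < m, g^[k] x ∈ C) : f^[m] x = g^[m] x := by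
  induction m with
  | zero => rfl
  | succ m ih =>
    rw [Function.iterate_succ_apply', Function.iterate_succ_apply',
      ih fun k hk => hx k (Nat.lt_succ_of_lt hk), h (hx m (Nat.lt_succ_self m))]

theorem eqOn_tropicalMutation_linearMutation (p q : ℝ) :
    EqOn (tropicalMutation p q) (linearMutation p q) (linearityCone p) := by
  rintro ⟨s, t⟩ ⟨hs, hst⟩
  simp only [tropicalMutation, linearMutation, max_eq_left hs, max_eq_left hst, Prod.mk.injEq]
  constructor <;> ring

theorem Real.sin_add_one_mul_add_sin_sub_one_mul (x φ : ℝ) :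
    sin ((x + 1) * φ) + sin ((x - 1) * φ) = 2 * cos φ * sin (x * φ) := by
  rw [add_one_mul, sub_one_mul, sin_add, sin_sub]
  ring

theorem sin_mul_linearMutation_iterate {p q φ : ℝ} (hpq : p * q = 2 + 2 * cos φ) (s t : ℝ)
    (k : ℕ) :
    sin φ * ((linearMutation p q)^[k] (s, t)).1
        = s * (sin ((k + 1) * φ) + sin (k * φ)) + q * t * sin (k * φ) ∧
      sin φ * ((linearMutation p q)^[k] (s, t)).2
        = -(p * s * sin (k * φ) + t * (sin (k * φ) + sin ((k - 1) * φ))) := by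
  induction k with
  | zero =>
    simp only [Function.iterate_zero, id_eq, Nat.cast_zero, zero_add, one_mul, zero_mul, sin_zero,
      zero_sub, neg_mul, sin_neg]
    constructor <;> ring
  | succ k ih =>
    obtain ⟨ih₁, ih₂⟩ := ih
    have hrec₀ := sin_add_one_mul_add_sin_sub_one_mul k φ
    have hrec₁ := sin_add_one_mul_add_sin_sub_one_mul (k + 1) φ
    rw [add_sub_cancel_right] at hrec₁
    rw [Function.iterate_succ_apply']
    simp only [linearMutation, Nat.cast_succ, add_sub_cancel_right]
    constructor
    · linear_combination (p * q - 1) * ih₁ + q * ih₂ - s * hrec₁ - q * t * hrec₀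
        + (s * sin ((k + 1) * φ) + q * t * sin (k * φ)) * hpq
    · linear_combination -p * ih₁ - ih₂ + t * hrec₀ - t * sin (k * φ) * hpq

theorem linearMutation_iterate_mem_linearityCone {p q φ s t : ℝ} (hp : 0 ≤ p) (hq : 0 ≤ q)
    (hpq : p * q = 2 + 2 * cos φ) (hφ : 0 < φ) (hφπ : φ < π) (hs : 0 ≤ s) (ht : 0 ≤ t) {k : ℕ}
    (hk : (k + 1) * φ ≤ π) :
    (linearMutation p q)^[k] (s, t) ∈ linearityCone p := by
  obtain ⟨h₁, h₂⟩ := sin_mul_linearMutation_iterate hpq s t k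
  set v := (linearMutation p q)^[k] (s, t)
  have hsinφ : 0 < sin φ := sin_pos_of_pos_of_lt_pi hφ hφπ
  have hsin₀ : 0 ≤ sin (k * φ) := sin_nonneg_of_nonneg_of_le_pi (by positivity) (by linarith)
  have hsin₁ : 0 ≤ sin ((k + 1) * φ) := sin_nonneg_of_nonneg_of_le_pi (by positivity) hk
  have hrec := sin_add_one_mul_add_sin_sub_one_mul k φ
  constructor
  · refine nonneg_of_mul_nonneg_right ?_ hsinφ
    rw [h₁]
    positivity
  · refine nonneg_of_mul_nonneg_right ?_ hsinφ
    have key : sin φ * (v.2 + p * v.1)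
        = p * s * sin ((k + 1) * φ) + t * (sin ((k + 1) * φ) + sin (k * φ)) := by
      linear_combination h₂ + p * h₁ - t * hrec + t * sin (k * φ) * hpq
    rw [key]
    positivity

theorem stmt_18 (p q θ : ℝ) (hp : 0 < p) (hq : 0 < q)
    (hθ₁ : 0 < θ) (hθ₂ : θ < π / 2) (hpq : p * q = 4 * Real.cos θ ^ 2)
    (μ τ : ℝ × ℝ → ℝ × ℝ)
    (hμ : ∀ s t : ℝ, μ (s, t) = (-s + q * max (t + p * max s 0) 0, -t - p * max s 0))
    (hτ : ∀ s t : ℝ, τ (s, t) = ((p * q - 1) * s + q * t, -p * s - t))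
    (n : ℕ) (hn : (2 * n + 2) * θ ≤ π)
    (s t : ℝ) (hs : 0 ≤ s) (ht : 0 ≤ t) :
    μ^[n + 1] (s, t) = τ^[n + 1] (s, t) := by
  obtain rfl : μ = tropicalMutation p q := funext fun ⟨s, t⟩ => hμ s t
  obtain rfl : τ = linearMutation p q := funext fun ⟨s, t⟩ => hτ s t
  have hpq' : p * q = 2 + 2 * cos (2 * θ) := by rw [hpq, cos_two_mul]; ring
  refine (eqOn_tropicalMutation_linearMutation p q).iterate_apply_eq fun k hk => ?_
  refine linearMutation_iterate_mem_linearityCone hp.le hq.le hpq' (by positivity) (by linarith)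
    hs ht ?_
  have hk' : (k : ℝ) + 1 ≤ n + 1 := by exact_mod_cast hk
  nlinarith
end
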